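/- arXiv:2010.10756 — 3 statements merged into one kernel-verified Lean document; each statement's English description precedes it below -/
import Mathlib

section
/- Let s₁ and s₂ be positive integers and let x and a be nonnegative integers with a ≤ s₂. Then there exists an s₁ × s₂ matrix T with integer entries such that every row of T has exactly a entries equal to x+1 and exactly s₂ − a entries equal to x, and the sums of any two columns of T differ by at most 1. -/
/-!
Write the marks `0, 1, …, s₁ a - 1` into the matrix, mark `m` going to row `m / a` and column
`m % s₂`. Each row receives a block of `a ≤ s₂` consecutive marks, which land in distinct
columns, so it has exactly `a` marked cells. Column `j` receives the marks `m < s₁ a` with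
`m ≡ j [MOD s₂]`, and there are `⌊s₁ a / s₂⌋` or `⌊s₁ a / s₂⌋ + 1` of those. Adding `x` to the
`0/1` matrix of marked cells gives the required matrix.
-/

open Finset

namespace BalancedMatrix

section ZeroOne

variable {κ : Type*} {s : Finset κ} {f : κ → ℕ}

lemma card_filter_eq_one_of_le_one (hf : ∀ j, f j ≤ 1) :
    #{j ∈ s | f j = 1} = ∑ j ∈ s, f j := by
  rw [card_filter]
  exact sum_congr rfl fun j _ => by have := hf j; split <;> omega

lemma card_filter_eq_zero_of_le_one (hf : ∀ j, f j ≤ 1) :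
    #{j ∈ s | f j = 0} = #s - ∑ j ∈ s, f j := by
  have hsplit := card_filter_add_card_filter_not (s := s) (p := fun j => f j = 1)
  have hne : ∀ j, f j ≠ 1 ↔ f j = 0 := fun j => by have := hf j; omega
  simp only [hne] at hsplit
  rw [← card_filter_eq_one_of_le_one hf]
  omega

end ZeroOne

lemma exists_shift_of_zero_one {ι κ : Type*} [Fintype ι] [Fintype κ] (B : ι → κ → ℕ)
    (hB : ∀ i j, B i j ≤ 1) (a : ℕ) (hrow : ∀ i, ∑ j, B i j = a)
    (hcol : ∀ j₁ j₂, |(∑ i, B i j₁ : ℤ) - ∑ i, B i j₂| ≤ 1) (x : ℕ) :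
    ∃ T : ι → κ → ℤ,
      (∀ i, #{j | T i j = (x : ℤ) + 1} = a ∧ #{j | T i j = (x : ℤ)} = Fintype.card κ - a) ∧
      ∀ j₁ j₂, |(∑ i, T i j₁) - ∑ i, T i j₂| ≤ 1 := by
  refine ⟨fun i j => x + B i j, fun i => ⟨?_, ?_⟩, fun j₁ j₂ => ?_⟩
  · simp only [add_right_inj, Nat.cast_eq_one]
    rw [card_filter_eq_one_of_le_one (hB i), hrow]
  · simp only [add_eq_left, Nat.cast_eq_zero]
    rw [card_filter_eq_zero_of_le_one (hB i), hrow, card_univ]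
  · simp only [sum_add_distrib, add_sub_add_left_eq_sub]
    exact_mod_cast hcol j₁ j₂

variable (s a n : ℕ)

def markCount (i j : ℕ) : ℕ := #{m ∈ range (s * a) | m / a = i ∧ m % n = j}

variable {s a n}

lemma div_eq_iff_mem_Ico {m i : ℕ} (ha : 0 < a) : m / a = i ↔ m ∈ Ico (i * a) (i * a + a) := by
  rw [Nat.div_eq_iff ha, mem_Ico]
  omega

lemma markCount_le_one (han : a ≤ n) (i j : ℕ) : markCount s a n i j ≤ 1 := by
  rcases a.eq_zero_or_pos with rfl | ha
  · simp [markCount]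
  refine card_le_one.mpr fun m₁ h₁ m₂ h₂ => ?_
  simp only [mem_filter, div_eq_iff_mem_Ico ha] at h₁ h₂
  have hIco : Ico (i * a) (i * a + a) ⊆ Ico (i * a) (i * a + n) := Ico_subset_Ico_right (by omega)
  exact Nat.mod_injOn_Ico _ _ (hIco h₁.2.1) (hIco h₂.2.1) (h₁.2.2.trans h₂.2.2.symm)

lemma card_filter_div_eq {i : ℕ} (hi : i < s) : #{m ∈ range (s * a) | m / a = i} = a := by
  rcases a.eq_zero_or_pos with rfl | ha
  · simp
  have hfilter : {m ∈ range (s * a) | m / a = i} = Ico (i * a) (i * a + a) := by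
    ext m
    simp only [mem_filter, mem_range, div_eq_iff_mem_Ico ha, mem_Ico]
    constructor
    · exact And.right
    · intro hm
      refine ⟨hm.2.trans_le ?_, hm⟩
      calc i * a + a = (i + 1) * a := by ring
        _ ≤ s * a := Nat.mul_le_mul_right _ hi
  rw [hfilter, Nat.card_Ico, Nat.add_sub_cancel_left]

lemma sum_markCount_row (hn : 0 < n) {i : ℕ} (hi : i < s) :
    ∑ j ∈ range n, markCount s a n i j = a := by
  calc ∑ j ∈ range n, markCount s a n i j = #{m ∈ range (s * a) | m / a = i} := by
        rw [card_eq_sum_card_fiberwise (f := (· % n)) (t := range n)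
          fun m _ => mem_range.mpr (Nat.mod_lt m hn)]
        simp only [markCount, filter_filter]
    _ = a := card_filter_div_eq hi

lemma sum_markCount_col (j : ℕ) :
    ∑ i ∈ range s, markCount s a n i j = #{m ∈ range (s * a) | m % n = j} := by
  have hmaps : (({m ∈ range (s * a) | m % n = j} : Finset ℕ) : Set ℕ).MapsTo (· / a) (range s) :=
    fun m hm => mem_range.mpr <| Nat.div_lt_of_lt_mul <| by
      simpa [mul_comm] using (mem_filter.mp hm).1
  rw [card_eq_sum_card_fiberwise hmaps]
  simp only [markCount, filter_filter, and_comm]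

lemma card_filter_mod_eq (hn : 0 < n) (N : ℕ) {j : ℕ} (hj : j < n) :
    #{m ∈ range N | m % n = j} = N / n + if j < N % n then 1 else 0 := by
  have hmod : ∀ m, m % n = j ↔ m ≡ j [MOD n] := fun m => by rw [Nat.ModEq, Nat.mod_eq_of_lt hj]
  simp only [hmod, ← Nat.count_eq_card_filter_range, Nat.count_modEq_card N hn, Nat.mod_eq_of_lt hj]

lemma abs_sub_card_filter_mod_eq_le_one (hn : 0 < n) (N : ℕ) {j₁ j₂ : ℕ} (hj₁ : j₁ < n)
    (hj₂ : j₂ < n) :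
    |(#{m ∈ range N | m % n = j₁} : ℤ) - #{m ∈ range N | m % n = j₂}| ≤ 1 := by
  rw [card_filter_mod_eq hn N hj₁, card_filter_mod_eq hn N hj₂, abs_le]
  constructor <;> split_ifs <;> push_cast <;> omega

end BalancedMatrix

open BalancedMatrix in
theorem balanced_matrix_exists_general (s₁ s₂ : ℕ) (hs₂ : 0 < s₂)
    (x a : ℕ) (ha : a ≤ s₂) :
    ∃ T : Fin s₁ → Fin s₂ → ℤ,
      (∀ i : Fin s₁,
        (Finset.univ.filter fun j : Fin s₂ => T i j = (x : ℤ) + 1).card = a ∧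
        (Finset.univ.filter fun j : Fin s₂ => T i j = (x : ℤ)).card = s₂ - a) ∧
      ∀ j₁ j₂ : Fin s₂, |(∑ i : Fin s₁, T i j₁) - ∑ i : Fin s₁, T i j₂| ≤ 1 := by
  have hrow (i : Fin s₁) : ∑ j : Fin s₂, markCount s₁ a s₂ i j = a := by
    rw [Fin.sum_univ_eq_sum_range (markCount s₁ a s₂ i), sum_markCount_row hs₂ i.isLt]
  have hcol (j : Fin s₂) :
      ∑ i : Fin s₁, markCount s₁ a s₂ i j = #{m ∈ range (s₁ * a) | m % s₂ = j} := by
    rw [Fin.sum_univ_eq_sum_range (markCount s₁ a s₂ · j), sum_markCount_col]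
  have hbal (j₁ j₂ : Fin s₂) :
      |(∑ i : Fin s₁, markCount s₁ a s₂ i j₁ : ℤ) - ∑ i : Fin s₁, markCount s₁ a s₂ i j₂| ≤ 1 := by
    simp only [← Nat.cast_sum, hcol]
    exact abs_sub_card_filter_mod_eq_le_one hs₂ _ j₁.isLt j₂.isLt
  have hshift := exists_shift_of_zero_one (fun (i : Fin s₁) (j : Fin s₂) => markCount s₁ a s₂ i j)
    (fun i j => markCount_le_one ha i j) a hrow hbal x
  rwa [Fintype.card_fin] at hshift

/-- Lemma 5: there is an `s₁ × s₂` integer matrix whose every row has exactly `a`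
entries equal to `x + 1` and exactly `s₂ - a` entries equal to `x`, and whose column
sums pairwise differ by at most `1`. -/
theorem balanced_matrix_exists (s₁ s₂ : ℕ) (hs₁ : 0 < s₁) (hs₂ : 0 < s₂)
    (x a : ℕ) (ha : a ≤ s₂) :
    ∃ T : Fin s₁ → Fin s₂ → ℤ,
      (∀ i : Fin s₁,
        (Finset.univ.filter fun j : Fin s₂ => T i j = (x : ℤ) + 1).card = a ∧
        (Finset.univ.filter fun j : Fin s₂ => T i j = (x : ℤ)).card = s₂ - a) ∧
      ∀ j₁ j₂ : Fin s₂, |(∑ i : Fin s₁, T i j₁) - ∑ i : Fin s₁, T i j₂| ≤ 1 :=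
  balanced_matrix_exists_general s₁ s₂ hs₂ x a ha
end

section
/- Let k ≥ 4 and r be integers such that 1 ≤ r ≤ (1/3)·√(2k), and let t = ⌈q⌉ where q is the unique real number with q ≥ 2 and q(q−1)/2 = 3r (explicitly, q = (1 + √(1 + 24r))/2). Then SP(2k + r, k) ≤ 2k + 4r − t − 1. -/
/-- An `(n,k)`-Sperner partition system: a set of partitions of `Fin n`, each with `k`
nonempty parts, such that no part of a partition is a subset of a part of a different
partition of the system. -/
def IsSpernerPartitionSystem (n k : ℕ) (P : Finset (Finset (Finset (Fin n)))) : Prop :=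
  (∀ Q ∈ P, Q.card = k ∧ ∅ ∉ Q ∧
    (Q : Set (Finset (Fin n))).PairwiseDisjoint id ∧ Q.sup id = Finset.univ) ∧
  ∀ Q₁ ∈ P, ∀ Q₂ ∈ P, Q₁ ≠ Q₂ → ∀ A ∈ Q₁, ∀ B ∈ Q₂, ¬ A ⊆ B

/-- `SP n k` is the maximum number of partitions in an `(n,k)`-Sperner partition system. -/
noncomputable def SP (n k : ℕ) : ℕ :=
  sSup {m | ∃ P : Finset (Finset (Finset (Fin n))),
    IsSpernerPartitionSystem n k P ∧ P.card = m}

/-!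
Suppose a Sperner system `P` on `n = 2k + r` points has `2k + 4r - t` partitions. Then every
part has at least two points (a singleton part would lie in a part of another partition), so
the excesses `|A| - 2` of the parts of each partition sum to `r`. Give a part of size 3 weight
2 and a larger part weight 3, and let every point carry the weight of its part. A part of
size `c` then carries at most `6 (c - 2)`, so the total weight is at most `6r |P|`.

At a point `x`, the sets `A \ {x}`, `A` the part of `x` in a partition of `P`, form an
antichain of nonempty subsets of the other `n - 1` points. Its 2-sets avoid the points that
occur as its singletons, and none of them lies inside one of its sets of size at least 3.
Since `(t - 1)(t - 2)/2 < 3r`, counting 2-sets forces weight at least `6r + 2` at `x`. As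
`9r² ≤ 2k`, this gives `n (6r + 2) > 6r |P|`, a contradiction; a larger system contains one
of exactly this size.
-/

open Finset

theorem Nat.two_mul_choose_two_add_self (n : ℕ) : 2 * n.choose 2 + n = n * n := by
  rw [Nat.choose_two_right, Nat.mul_div_cancel' (Nat.even_mul_pred_self n).two_dvd]
  cases n <;> simp [Nat.add_mul, Nat.mul_add]

theorem six_mul_add_two_le_of_le_choose {r t δ a₂ a₃ : ℕ} (ht : t * t + 4 ≤ 6 * r + 3 * t)
    (hsum : a₂ + a₃ + t = δ + 1 + 3 * r) (h₂ : a₂ ≤ δ.choose 2)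
    (h₃ : a₃ ≠ 0 → a₂ + 3 ≤ δ.choose 2) : 6 * r + 2 ≤ 2 * a₂ + 3 * a₃ := by
  have hδ := Nat.two_mul_choose_two_add_self δ
  by_contra! hlt
  -- With `t = δ + 1 + s` the hypotheses come down to `2δs + (s - 1)(s - 2) ≤ 0` if `a₃ = 0`,
  -- and to `2δs + (s - 1)(s - 6) ≤ 0` with `δ ≥ 3` otherwise.
  obtain ⟨s, rfl⟩ : ∃ s, t = δ + 1 + s := ⟨t - (δ + 1), by omega⟩
  rcases Nat.eq_zero_or_pos a₃ with rfl | ha₃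
  · rcases Nat.eq_zero_or_pos δ with rfl | hδ
    · have ha₂ : a₂ = 0 := by simpa using h₂
      have : s ≤ 2 := by nlinarith
      interval_cases s <;> omega
    · nlinarith [Nat.mul_le_mul_right s hδ, Nat.le_mul_self s]
  · have h₃ := h₃ ha₃.ne'
    have hδ : 3 ≤ δ := by nlinarith
    nlinarith [Nat.mul_le_mul_right s hδ, Nat.le_mul_self s]

/-- The weights are chosen so that a part of size `c ≥ 2` carries total weight
`c * partWeight c ≤ 6 * (c - 2)`. -/
def partWeight (c : ℕ) : ℕ := if c = 3 then 2 else if 4 ≤ c then 3 else 0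

section Antichain

variable {α : Type*} [DecidableEq α]

def freePoints (S : Finset α) (𝒜 : Finset (Finset α)) : Finset α :=
  S.filter fun y => {y} ∉ 𝒜

variable {𝒜 : Finset (Finset α)} {S : Finset α}

theorem IsAntichain.subset_freePoints
    (h𝒜 : IsAntichain (· ⊆ ·) (𝒜 : Set (Finset α))) (hS : ∀ E ∈ 𝒜, E ⊆ S)
    {E : Finset α} (hE : E ∈ 𝒜) (hE1 : 1 < #E) : E ⊆ freePoints S 𝒜 := by
  intro y hy
  refine mem_filter.2 ⟨hS E hE hy, fun hy𝒜 => ?_⟩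
  have hne : ({y} : Finset α) ≠ E := fun h => by simp [← h] at hE1
  exact h𝒜 hy𝒜 hE hne (singleton_subset_iff.2 hy)

theorem card_freePoints_add_card_filter_card_eq_one (hS : ∀ E ∈ 𝒜, E ⊆ S) :
    #(freePoints S 𝒜) + #(𝒜.filter (#· = 1)) = #S := by
  have hsingle : (S.filter fun y => {y} ∈ 𝒜).image ({·}) = 𝒜.filter (#· = 1) := by
    ext E
    simp only [mem_image, mem_filter, card_eq_one]
    constructor
    · rintro ⟨y, ⟨-, hy⟩, rfl⟩
      exact ⟨hy, y, rfl⟩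
    · rintro ⟨hE, y, rfl⟩
      exact ⟨y, ⟨hS _ hE (mem_singleton_self y), hE⟩, rfl⟩
  rw [freePoints, ← hsingle, card_image_of_injective _ singleton_injective, add_comm,
    card_filter_add_card_filter_not]

theorem IsAntichain.filter_card_eq_two_subset_powersetCard
    (h𝒜 : IsAntichain (· ⊆ ·) (𝒜 : Set (Finset α))) (hS : ∀ E ∈ 𝒜, E ⊆ S) :
    𝒜.filter (#· = 2) ⊆ (freePoints S 𝒜).powersetCard 2 := fun E hE => by
  obtain ⟨hE𝒜, hE2⟩ := mem_filter.1 hE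
  exact mem_powersetCard.2 ⟨h𝒜.subset_freePoints hS hE𝒜 (by omega), hE2⟩

theorem IsAntichain.card_filter_card_eq_two_add_choose_le
    (h𝒜 : IsAntichain (· ⊆ ·) (𝒜 : Set (Finset α))) (hS : ∀ E ∈ 𝒜, E ⊆ S)
    {B : Finset α} (hB : B ∈ 𝒜) (hB2 : 2 < #B) :
    #(𝒜.filter (#· = 2)) + (#B).choose 2 ≤ (#(freePoints S 𝒜)).choose 2 := by
  have hBU := h𝒜.subset_freePoints hS hB (by omega)
  have hsub : 𝒜.filter (#· = 2) ⊆
      (freePoints S 𝒜).powersetCard 2 \ B.powersetCard 2 := fun E hE => by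
    obtain ⟨hE𝒜, hE2⟩ := mem_filter.1 hE
    refine mem_sdiff.2 ⟨h𝒜.filter_card_eq_two_subset_powersetCard hS hE, fun hEB => ?_⟩
    exact h𝒜 hE𝒜 hB (by rintro rfl; omega) (mem_powersetCard.1 hEB).1
  have := card_le_card hsub
  rw [card_sdiff_of_subset (powersetCard_mono hBU), card_powersetCard, card_powersetCard] at this
  have := Nat.choose_le_choose 2 (card_le_card hBU)
  omega

theorem IsAntichain.six_mul_add_two_le_sum_partWeight
    (h𝒜 : IsAntichain (· ⊆ ·) (𝒜 : Set (Finset α))) (hS : ∀ E ∈ 𝒜, E ⊆ S) (hne : ∅ ∉ 𝒜)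
    {r t : ℕ} (ht : t * t + 4 ≤ 6 * r + 3 * t) (hcard : #𝒜 + t = #S + 1 + 3 * r) :
    6 * r + 2 ≤ ∑ E ∈ 𝒜, partWeight (#E + 1) := by
  have hcount : #𝒜 = #(𝒜.filter (#· = 1)) + #(𝒜.filter (#· = 2)) +
      #(𝒜.filter (3 ≤ #·)) := by
    rw [card_eq_sum_ones, sum_congr rfl fun E hE => show 1 =
        (if #E = 1 then 1 else 0) + (if #E = 2 then 1 else 0) + (if 3 ≤ #E then 1 else 0) by
      have := card_pos.2 (nonempty_iff_ne_empty.2 (ne_of_mem_of_not_mem hE hne))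
      split_ifs <;> omega]
    simp only [sum_add_distrib, sum_boole, Nat.cast_id]
  have hweight : ∑ E ∈ 𝒜, partWeight (#E + 1) =
      2 * #(𝒜.filter (#· = 2)) + 3 * #(𝒜.filter (3 ≤ #·)) := by
    rw [sum_congr rfl fun E _ => show partWeight (#E + 1) =
        (if #E = 2 then 2 else 0) + (if 3 ≤ #E then 3 else 0) by
      unfold partWeight; split_ifs <;> omega]
    simp only [sum_add_distrib, ← sum_filter, sum_const, smul_eq_mul, mul_comm]
  have hfree := card_freePoints_add_card_filter_card_eq_one hS
  rw [hweight]
  refine six_mul_add_two_le_of_le_choose ht (δ := #(freePoints S 𝒜)) (by omega) ?_ fun ha₃ => ?_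
  · simpa using card_le_card (h𝒜.filter_card_eq_two_subset_powersetCard hS)
  · obtain ⟨B, hB⟩ := card_ne_zero.1 ha₃
    obtain ⟨hB𝒜, hB3⟩ := mem_filter.1 hB
    have := h𝒜.card_filter_card_eq_two_add_choose_le hS hB𝒜 hB3
    have : Nat.choose 3 2 ≤ (#B).choose 2 := Nat.choose_le_choose 2 hB3
    rw [show Nat.choose 3 2 = 3 from rfl] at this
    omega

end Antichain

section PartOf
variable {α : Type*}

open Classical in
noncomputable def partOf (Q : Finset (Finset α)) (x : α) : Finset α :=
  if h : ∃ A ∈ Q, x ∈ A then h.choose else ∅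

theorem partOf_mem_and_mem {Q : Finset (Finset α)} {x : α} (h : ∃ A ∈ Q, x ∈ A) :
    partOf Q x ∈ Q ∧ x ∈ partOf Q x := by
  rw [partOf, dif_pos h]
  exact h.choose_spec

theorem partOf_eq_of_mem {Q : Finset (Finset α)} (hQ : (Q : Set (Finset α)).PairwiseDisjoint id)
    {A : Finset α} {x : α} (hA : A ∈ Q) (hx : x ∈ A) : partOf Q x = A := by
  obtain ⟨hmem, hxmem⟩ := partOf_mem_and_mem ⟨A, hA, hx⟩
  by_contra hne
  exact disjoint_left.1 (hQ hmem hA hne) hxmem hx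

theorem sum_partOf [Fintype α] [DecidableEq α] {M : Type*} [AddCommMonoid M]
    {Q : Finset (Finset α)} (hdisj : (Q : Set (Finset α)).PairwiseDisjoint id)
    (hcov : Q.sup id = univ) (g : Finset α → M) :
    ∑ x, g (partOf Q x) = ∑ A ∈ Q, #A • g A := by
  rw [← hcov, sup_eq_biUnion, sum_biUnion hdisj]
  refine sum_congr rfl fun A hA => ?_
  rw [sum_congr rfl fun x hx => by rw [partOf_eq_of_mem hdisj hA hx], sum_const, id]

end PartOf

namespace IsSpernerPartitionSystem
variable {n k : ℕ} {P : Finset (Finset (Finset (Fin n)))} {Q : Finset (Finset (Fin n))}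

theorem mono {P' : Finset (Finset (Finset (Fin n)))} (hP : IsSpernerPartitionSystem n k P)
    (hsub : P' ⊆ P) : IsSpernerPartitionSystem n k P' :=
  ⟨fun Q hQ => hP.1 Q (hsub hQ), fun Q₁ h₁ Q₂ h₂ => hP.2 Q₁ (hsub h₁) Q₂ (hsub h₂)⟩

theorem partOf_mem_and_mem (hP : IsSpernerPartitionSystem n k P) (hQ : Q ∈ P) (x : Fin n) :
    partOf Q x ∈ Q ∧ x ∈ partOf Q x := by
  have hx : x ∈ Q.sup id := (hP.1 Q hQ).2.2.2 ▸ mem_univ x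
  exact _root_.partOf_mem_and_mem (mem_sup.1 hx)

theorem two_le_card (hP : IsSpernerPartitionSystem n k P) (hP1 : 1 < #P) (hQ : Q ∈ P)
    {A : Finset (Fin n)} (hA : A ∈ Q) : 2 ≤ #A := by
  by_contra! hA2
  obtain ⟨y, rfl⟩ : ∃ y, A = {y} := card_eq_one.1 <| le_antisymm (by omega) <|
    card_pos.2 <| nonempty_iff_ne_empty.2 <| ne_of_mem_of_not_mem hA (hP.1 Q hQ).2.1
  obtain ⟨Q', hQ', hne⟩ := exists_mem_ne hP1 Q
  obtain ⟨hmem, hy⟩ := hP.partOf_mem_and_mem hQ' y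
  exact hP.2 Q hQ Q' hQ' hne.symm _ hA _ hmem (singleton_subset_iff.2 hy)

theorem eq_of_erase_partOf_subset (hP : IsSpernerPartitionSystem n k P) (hQ : Q ∈ P)
    {Q' : Finset (Finset (Fin n))} (hQ' : Q' ∈ P) {x : Fin n}
    (h : (partOf Q x).erase x ⊆ (partOf Q' x).erase x) : Q = Q' := by
  by_contra hne
  obtain ⟨hmem, hx⟩ := hP.partOf_mem_and_mem hQ x
  obtain ⟨hmem', hx'⟩ := hP.partOf_mem_and_mem hQ' x
  refine hP.2 Q hQ Q' hQ' hne _ hmem _ hmem' ?_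
  rw [← insert_erase hx, ← insert_erase hx']
  exact insert_subset_insert x h

theorem six_mul_add_two_le_sum_partWeight (hP : IsSpernerPartitionSystem n k P)
    (hP1 : 1 < #P) (x : Fin n) {r t : ℕ} (ht : t * t + 4 ≤ 6 * r + 3 * t)
    (hcard : #P + t = n + 3 * r) :
    6 * r + 2 ≤ ∑ Q ∈ P, partWeight #(partOf Q x) := by
  set link : Finset (Finset (Fin n)) → Finset (Fin n) := fun Q => (partOf Q x).erase x
  have hinj : Set.InjOn link P := fun Q hQ Q' hQ' h =>
    hP.eq_of_erase_partOf_subset hQ hQ' h.le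
  have hanti : IsAntichain (· ⊆ ·) (P.image link : Set (Finset (Fin n))) := by
    rw [coe_image]
    rintro _ ⟨Q, hQ, rfl⟩ _ ⟨Q', hQ', rfl⟩ hne h
    exact hne (congrArg link (hP.eq_of_erase_partOf_subset hQ hQ' h))
  have hsum : ∑ Q ∈ P, partWeight #(partOf Q x) = ∑ E ∈ P.image link, partWeight (#E + 1) := by
    rw [sum_image hinj]
    refine sum_congr rfl fun Q hQ => ?_
    rw [card_erase_add_one (hP.partOf_mem_and_mem hQ x).2]
  rw [hsum]
  refine hanti.six_mul_add_two_le_sum_partWeight (S := univ.erase x)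
    (by simp [link, Finset.erase_subset_erase]) ?_ ht ?_
  · intro hmem
    obtain ⟨Q, hQ, hE⟩ := mem_image.1 hmem
    have := hP.two_le_card hP1 hQ (hP.partOf_mem_and_mem hQ x).1
    have := card_erase_of_mem (hP.partOf_mem_and_mem hQ x).2
    simp only [link] at hE
    rw [hE, card_empty] at this
    omega
  · rw [card_image_of_injOn hinj, card_erase_of_mem (mem_univ x), card_univ, Fintype.card_fin]
    have : 0 < n := x.pos
    omega

theorem sum_partWeight_partOf_le (hP : IsSpernerPartitionSystem n k P) (hP1 : 1 < #P)
    (hQ : Q ∈ P) : ∑ x, partWeight #(partOf Q x) ≤ 6 * (n - 2 * k) := by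
  obtain ⟨hk, -, hdisj, hcov⟩ := hP.1 Q hQ
  have hA2 : ∀ A ∈ Q, 2 ≤ #A := fun A hA => hP.two_le_card hP1 hQ hA
  have hn : ∑ A ∈ Q, (#A - 2) + 2 * k = n := by
    have hcard := sum_partOf hdisj hcov fun _ => 1
    simp only [sum_const, card_univ, Fintype.card_fin, smul_eq_mul, mul_one] at hcard
    have : ∑ A ∈ Q, (#A - 2 + 2) = ∑ A ∈ Q, #A :=
      sum_congr rfl fun A hA => Nat.sub_add_cancel (hA2 A hA)
    rw [sum_add_distrib, sum_const, hk, smul_eq_mul] at this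
    omega
  calc ∑ x, partWeight #(partOf Q x) = ∑ A ∈ Q, #A • partWeight #A :=
      sum_partOf hdisj hcov fun A => partWeight #A
    _ ≤ ∑ A ∈ Q, 6 * (#A - 2) := sum_le_sum fun A hA => by
      have := hA2 A hA
      rw [smul_eq_mul]
      unfold partWeight
      split_ifs <;> omega
    _ = 6 * (n - 2 * k) := by rw [← mul_sum]; omega

theorem card_add_ne {k r t : ℕ} {P : Finset (Finset (Finset (Fin (2 * k + r))))}
    (hP : IsSpernerPartitionSystem (2 * k + r) k P) (hr : 1 ≤ r) (ht3 : 3 ≤ t)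
    (ht : t * t + 4 ≤ 6 * r + 3 * t) (hk : 9 * r ^ 2 ≤ 2 * k) :
    #P + t ≠ 2 * k + 4 * r := by
  intro hcard
  have hP1 : 1 < #P := by nlinarith
  have hlower : (2 * k + r) * (6 * r + 2) ≤ ∑ x, ∑ Q ∈ P, partWeight #(partOf Q x) := by
    simpa using card_nsmul_le_sum univ _ _ fun x _ =>
      hP.six_mul_add_two_le_sum_partWeight hP1 x ht (by omega)
  have hupper : ∑ x, ∑ Q ∈ P, partWeight #(partOf Q x) ≤ #P * (6 * r) := by
    rw [sum_comm]
    simpa using sum_le_card_nsmul P _ _ fun Q hQ => hP.sum_partWeight_partOf_le hP1 hQ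
  nlinarith

end IsSpernerPartitionSystem

theorem SP_lt_of_forall_card_ne {n k N : ℕ}
    (h : ∀ P, IsSpernerPartitionSystem n k P → #P ≠ N) : SP n k < N := by
  have hempty : IsSpernerPartitionSystem n k ∅ := ⟨by simp, by simp⟩
  have hN : N ≠ 0 := (h ∅ hempty).symm
  suffices SP n k ≤ N - 1 by omega
  refine csSup_le ⟨0, ∅, hempty, rfl⟩ ?_
  rintro _ ⟨P, hP, rfl⟩
  by_contra! hlt
  obtain ⟨P', hsub, hcard⟩ := exists_subset_card_eq (show N ≤ #P by omega)
  exact h P' (hP.mono hsub) hcard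

theorem SP_add_lt {k r t : ℕ} (hr : 1 ≤ r) (ht3 : 3 ≤ t) (ht : t * t + 4 ≤ 6 * r + 3 * t)
    (hk : 9 * r ^ 2 ≤ 2 * k) : SP (2 * k + r) k + t < 2 * k + 4 * r := by
  have htr : t ≤ 2 * k + 4 * r := by nlinarith
  have := SP_lt_of_forall_card_ne (N := 2 * k + 4 * r - t) fun P hP hcard =>
    hP.card_add_ne hr ht3 ht hk (by omega)
  omega

theorem ceil_sub_one_mul_ceil_sub_two_lt {q : ℝ} (hq : 1 < q) :
    ((⌈q⌉ : ℝ) - 1) * ((⌈q⌉ : ℝ) - 2) < q * (q - 1) := by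
  have hlt : (⌈q⌉ : ℝ) < q + 1 := Int.ceil_lt_add_one q
  have hle : q ≤ ⌈q⌉ := Int.le_ceil q
  have h1 : (1 : ℤ) < ⌈q⌉ := Int.lt_ceil.2 (by exact_mod_cast hq)
  have h2 : (2 : ℝ) ≤ ⌈q⌉ := by exact_mod_cast (show (2 : ℤ) ≤ ⌈q⌉ by omega)
  nlinarith

theorem one_add_sqrt_div_two_mul_sub_one {x : ℝ} (hx : 0 ≤ 1 + 24 * x) :
    (1 + √(1 + 24 * x)) / 2 * ((1 + √(1 + 24 * x)) / 2 - 1) = 6 * x := by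
  linear_combination Real.sq_sqrt hx / 4

/-- `(1 + √(1 + 24r)) / 2` is `L₂(3r)`; the last conjunct is `(t - 1)(t - 2) < 6r` sharpened by
parity. -/
theorem exists_natCast_eq_ceil_L₂ {r : ℕ} (hr : 1 ≤ r) :
    ∃ t : ℕ, (t : ℤ) = ⌈(1 + √(1 + 24 * (r : ℝ))) / 2⌉ ∧ 3 ≤ t ∧
      t * t + 4 ≤ 6 * r + 3 * t := by
  set q := (1 + √(1 + 24 * (r : ℝ))) / 2 with hq
  have hr' : (1 : ℝ) ≤ r := by exact_mod_cast hr
  have hq3 : 3 ≤ q := by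
    have : (5 : ℝ) ≤ √(1 + 24 * (r : ℝ)) :=
      (Real.le_sqrt (by norm_num) (by positivity)).2 (by linarith)
    linarith
  have hlt := ceil_sub_one_mul_ceil_sub_two_lt (q := q) (by linarith)
  rw [one_add_sqrt_div_two_mul_sub_one (by positivity)] at hlt
  have h3 : (3 : ℤ) ≤ ⌈q⌉ := Int.le_ceil_iff.2 (by push_cast; linarith)
  obtain ⟨t, ht⟩ : ∃ t : ℕ, (t : ℤ) = ⌈q⌉ := ⟨_, Int.toNat_of_nonneg (by omega)⟩
  rw [← ht] at hlt h3
  refine ⟨t, ht, by omega, ?_⟩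
  have hlt : ((t : ℤ) - 1) * ((t : ℤ) - 2) < 6 * r := by exact_mod_cast hlt
  obtain ⟨m, hm⟩ := Int.even_mul_succ_self ((t : ℤ) - 2)
  have : ((t : ℤ) - 1) * ((t : ℤ) - 2) + 2 ≤ 6 * r := by
    rw [show ((t : ℤ) - 1) * ((t : ℤ) - 2) = m + m by rw [← hm]; ring] at hlt ⊢
    omega
  zify
  nlinarith

theorem sperner_small_r_upper_bound_general (k r : ℕ) (hr1 : 1 ≤ r)
    (hr2 : (3 * r : ℝ) ≤ Real.sqrt (2 * k)) :
    (SP (2 * k + r) k : ℝ) ≤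
      2 * k + 4 * r - ((⌈(1 + Real.sqrt (1 + 24 * (r : ℝ))) / 2⌉ : ℤ) : ℝ) - 1 := by
  obtain ⟨t, hceil, ht3, ht⟩ := exists_natCast_eq_ceil_L₂ hr1
  have hk : 9 * r ^ 2 ≤ 2 * k := by
    have := (Real.le_sqrt (by positivity) (by positivity)).1 hr2
    exact_mod_cast (by push_cast; nlinarith : ((9 * r ^ 2 : ℕ) : ℝ) ≤ ((2 * k : ℕ) : ℝ))
  have hSP : ((SP (2 * k + r) k + t + 1 : ℕ) : ℝ) ≤ ((2 * k + 4 * r : ℕ) : ℝ) := by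
    exact_mod_cast SP_add_lt hr1 ht3 ht hk
  rw [← hceil]
  push_cast at hSP ⊢
  linarith

/-- Lemma 8: for `k ≥ 4` and `1 ≤ r ≤ (1/3)√(2k)`, with `t = ⌈(1 + √(1 + 24r))/2⌉`
(the ceiling of the unique `q ≥ 2` with `q(q-1)/2 = 3r`),
`SP(2k + r, k) ≤ 2k + 4r - t - 1`. -/
theorem sperner_small_r_upper_bound (k r : ℕ) (hk : 4 ≤ k) (hr1 : 1 ≤ r)
    (hr2 : (3 * r : ℝ) ≤ Real.sqrt (2 * k)) :
    (SP (2 * k + r) k : ℝ) ≤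
      2 * k + 4 * r - ((⌈(1 + Real.sqrt (1 + 24 * (r : ℝ))) / 2⌉ : ℤ) : ℝ) - 1 :=
  sperner_small_r_upper_bound_general k r hr1 hr2
end

section
/- Let k ≥ 3 be odd and n > 2k an integer with n ≡ k+1 (mod 2k). Then Q ≤ a(u)/(k−1) ≤ MMS(n,k); in particular Q ≤ MMS(n,k). -/
/-- The Meagher–Moura–Stevens bound `MMS(n,k) = C(n,c) / (k - r + r(c+1)/(n-c))`,
where `c = n / k` and `r = n % k`. -/
noncomputable def MMS (n k : ℕ) : ℝ :=
  (n.choose (n / k) : ℝ) /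
    ((k : ℝ) - (n % k : ℕ) + (n % k : ℕ) * ((n / k : ℕ) + 1) / ((n : ℝ) - (n / k : ℕ)))

/-- `e_ℓ = C(n/2, d-ℓ)·C(n/2, d+1+ℓ)` (sizes of the classes of `(2d+1)`-sets). -/
def ee (n d ℓ : ℕ) : ℕ := (n / 2).choose (d - ℓ) * (n / 2).choose (d + 1 + ℓ)

/-- `e*_ℓ = C(n/2, d+1-ℓ)·C(n/2, d+1+ℓ)` (sizes of the classes of `(2d+2)`-sets). -/
def es (n d ℓ : ℕ) : ℕ := (n / 2).choose (d + 1 - ℓ) * (n / 2).choose (d + 1 + ℓ)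

/-- `a(x) = 2·Σ_{ℓ=x+1}^{d} e_ℓ`. -/
def aF (n d x : ℕ) : ℕ := 2 * ∑ ℓ ∈ Finset.Icc (x + 1) d, ee n d ℓ

/-- `b(x) = e*_0 + Σ_{ℓ=1}^{x} e*_ℓ`. -/
def bF (n d x : ℕ) : ℕ := es n d 0 + ∑ ℓ ∈ Finset.Icc 1 x, es n d ℓ

/-- `Φ = {(i,j) : u+1 ≤ i ≤ j ≤ d, j - i ≤ u}`. -/
def Phi (u d : ℕ) : Finset (ℕ × ℕ) :=
  (Finset.Icc (u + 1) d ×ˢ Finset.Icc (u + 1) d).filter fun p => p.1 ≤ p.2 ∧ p.2 - p.1 ≤ u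

/-- The sequence `η*_0, …, η*_u` determined by `Q`: it sums (with `⌊η*_0/2⌋` in place of
`η*_0`) to `Q/2`, and is a "greedy prefix" of `e*_0, …, e*_u`. -/
def EtaSpec (n d u Q : ℕ) (η : ℕ → ℕ) : Prop :=
  η 0 / 2 + ∑ ℓ ∈ Finset.Icc 1 u, η ℓ = Q / 2 ∧
  ∃ x ≤ u, (∀ ℓ < x, η ℓ = es n d ℓ) ∧ η x < es n d x ∧
    (∀ ℓ, x < ℓ → ℓ ≤ u → η ℓ = 0) ∧ (x = 0 → η 0 % 2 = es n d 0 % 2)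

/-- Feasibility for the integer program `I_(n,k)` of Definition 9. -/
def Feasible (n d u : ℕ) (η : ℕ → ℕ) (sol : ℕ × ℕ → ℕ) : Prop :=
  (∀ ℓ ∈ Finset.Icc 1 u,
    ∑ p ∈ (Phi u d).filter (fun p => p.2 = p.1 + ℓ), sol p ≤ η ℓ) ∧
  (∑ p ∈ (Phi u d).filter (fun p => p.2 = p.1), sol p ≤ η 0 / 2) ∧
  (∀ ℓ ∈ Finset.Icc (u + 1) d,
    (∑ p ∈ (Phi u d).filter (fun p => p.1 = ℓ), sol p) +
      (∑ p ∈ (Phi u d).filter (fun p => p.2 = ℓ), sol p) ≤ ee n d ℓ)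

/-!
Vandermonde's identity splits `C(n, 2d+1) = a(u) + 2 Σ_{ℓ ≤ u} e_ℓ`, so `a(u)/(k-1) ≤ MMS(n,k)`
amounts to `(2d+2) a(u) ≤ 2 (k-1) (n-2d-1) Σ_{ℓ ≤ u} e_ℓ`. As `a(u) ≤ (k-1) b(u)`, it suffices that
`(d+1) e*_ℓ ≤ (n-2d-1) e_ℓ` for `ℓ ≤ u`; by `(d+1-ℓ) e*_ℓ = (n/2-d+ℓ) e_ℓ` this holds once
`3ℓ ≤ d`. Finally `u ≤ d/3` by minimality of `u`: both `e` and `e*` decrease in `ℓ`, so at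
`x = d/3` we get `a(x) ≤ 2(d-x) e_x` and `(x+1) e*_x ≤ b(x)`, which gives `a(x) ≤ (k-1) b(x)`.
-/

theorem Nat.choose_mul_choose_succ_le {m i j : ℕ} (hij : i < j) :
    m.choose i * m.choose (j + 1) ≤ m.choose (i + 1) * m.choose j := by
  refine Nat.le_of_mul_le_mul_right (c := (i + 1) * (j + 1)) ?_ (by positivity)
  calc m.choose i * m.choose (j + 1) * ((i + 1) * (j + 1))
      = m.choose i * (i + 1) * (m.choose (j + 1) * (j + 1)) := by ring
    _ = m.choose i * (i + 1) * (m.choose j * (m - j)) := by rw [Nat.choose_succ_right_eq]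
    _ = m.choose i * m.choose j * ((m - j) * (i + 1)) := by ring
    _ ≤ m.choose i * m.choose j * ((m - i) * (j + 1)) :=
        Nat.mul_le_mul_left _ (Nat.mul_le_mul (by omega) (by omega))
    _ = m.choose i * (m - i) * m.choose j * (j + 1) := by ring
    _ = m.choose (i + 1) * m.choose j * ((i + 1) * (j + 1)) := by
        rw [← Nat.choose_succ_right_eq]; ring

theorem Nat.choose_add_self_two_mul_add_one (m d : ℕ) :
    (m + m).choose (2 * d + 1) =
      2 * ∑ ℓ ∈ Finset.range (d + 1), m.choose (d - ℓ) * m.choose (d + 1 + ℓ) := by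
  rw [Nat.add_choose_eq, Finset.Nat.sum_antidiagonal_eq_sum_range_succ_mk,
    show (2 * d + 1).succ = (d + 1) + (d + 1) by omega, Finset.sum_range_add,
    ← Finset.sum_range_reflect]
  refine (congrArg₂ (· + ·) (Finset.sum_congr rfl fun ℓ hℓ => ?_)
    (Finset.sum_congr rfl fun ℓ hℓ => ?_)).trans (two_mul _).symm
  · have hℓd := Finset.mem_range.mp hℓ
    rw [show 2 * d + 1 - (d + 1 - 1 - ℓ) = d + 1 + ℓ by omega, show d + 1 - 1 - ℓ = d - ℓ by omega]
  · rw [show 2 * d + 1 - (d + 1 + ℓ) = d - ℓ by omega, mul_comm]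

theorem div_le_add_div_add {α : Type*} [Field α] [LinearOrder α] [IsStrictOrderedRing α]
    {a e c t : α} (hc : 0 < c) (ht : 0 ≤ t) (h : a * t ≤ e * c) :
    a / c ≤ (a + e) / (c + t) := by
  rw [div_le_div_iff₀ hc (by positivity)]
  linarith

section Classes

variable {n d : ℕ}

theorem ee_succ_le {ℓ : ℕ} (hℓ : ℓ < d) : ee n d (ℓ + 1) ≤ ee n d ℓ := by
  unfold ee
  rw [show d - ℓ = d - (ℓ + 1) + 1 by omega, show d + 1 + (ℓ + 1) = d + 1 + ℓ + 1 by omega]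
  exact Nat.choose_mul_choose_succ_le (by omega)

theorem es_succ_le {ℓ : ℕ} (hℓ : ℓ ≤ d) : es n d (ℓ + 1) ≤ es n d ℓ := by
  unfold es
  rw [show d + 1 - ℓ = d - ℓ + 1 by omega, show d + 1 - (ℓ + 1) = d - ℓ by omega,
    show d + 1 + (ℓ + 1) = d + 1 + ℓ + 1 by omega]
  exact Nat.choose_mul_choose_succ_le (by omega)

theorem ee_antitoneOn : AntitoneOn (ee n d) (Set.Iic d) := by
  refine antitoneOn_of_le_sub_one Set.ordConnected_Iic fun ℓ hℓ hℓd _ => ?_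
  obtain ⟨ℓ, rfl⟩ := Nat.exists_eq_add_one_of_ne_zero (by simpa using hℓ)
  simpa using ee_succ_le (n := n) (Set.mem_Iic.mp hℓd)

theorem es_antitoneOn : AntitoneOn (es n d) (Set.Iic (d + 1)) := by
  refine antitoneOn_of_le_sub_one Set.ordConnected_Iic fun ℓ hℓ hℓd _ => ?_
  obtain ⟨ℓ, rfl⟩ := Nat.exists_eq_add_one_of_ne_zero (by simpa using hℓ)
  simpa using es_succ_le (n := n) (Nat.le_of_lt_succ (Set.mem_Iic.mp hℓd))

theorem es_mul_eq_ee_mul {ℓ : ℕ} (hℓ : ℓ ≤ d) (hd : d ≤ n / 2) :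
    es n d ℓ * (d + 1 - ℓ) = ee n d ℓ * (n / 2 - d + ℓ) := by
  unfold es ee
  rw [show d + 1 - ℓ = d - ℓ + 1 by omega, show n / 2 - d + ℓ = n / 2 - (d - ℓ) by omega,
    mul_right_comm, Nat.choose_succ_right_eq]
  ring

theorem aF_le_two_mul_sub_mul_ee (x : ℕ) : aF n d x ≤ 2 * ((d - x) * ee n d x) := by
  unfold aF
  gcongr
  simpa using Finset.sum_le_card_nsmul (Finset.Icc (x + 1) d) (ee n d) (ee n d x) fun ℓ hℓ => by
    rw [Finset.mem_Icc] at hℓ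
    exact ee_antitoneOn (Set.mem_Iic.mpr (by omega)) (Set.mem_Iic.mpr hℓ.2) (by omega)

theorem bF_eq_sum_range (x : ℕ) : bF n d x = ∑ ℓ ∈ Finset.range (x + 1), es n d ℓ := by
  rw [bF, Finset.sum_range_succ', add_comm, ← Finset.Ico_add_one_right_eq_Icc,
    Finset.sum_Ico_eq_sum_range, add_tsub_cancel_right]
  simp only [add_comm 1]

theorem succ_mul_es_le_bF {x : ℕ} (hx : x ≤ d + 1) : (x + 1) * es n d x ≤ bF n d x := by
  rw [bF_eq_sum_range]
  simpa using Finset.card_nsmul_le_sum (Finset.range (x + 1)) (es n d) (es n d x) fun ℓ hℓ => by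
    rw [Finset.mem_range] at hℓ
    exact es_antitoneOn (Set.mem_Iic.mpr (by omega)) (Set.mem_Iic.mpr hx) (by omega)

theorem choose_eq_aF_add_two_mul_sum_ee (hn : Even n) {u : ℕ} (hu : u ≤ d) :
    n.choose (2 * d + 1) = aF n d u + 2 * ∑ ℓ ∈ Finset.range (u + 1), ee n d ℓ := by
  obtain ⟨m, rfl⟩ := hn
  rw [add_comm (aF _ d u), aF, ← Finset.Ico_add_one_right_eq_Icc, ← mul_add,
    Finset.sum_range_add_sum_Ico _ (by omega), Nat.choose_add_self_two_mul_add_one]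
  simp only [ee, ← two_mul, Nat.mul_div_cancel_left m two_pos]

theorem aF_le_mul_bF_of_le {x c : ℕ} (hx : x ≤ d) (hd : d ≤ n / 2)
    (h : 2 * (d - x) * (d + 1 - x) ≤ c * ((x + 1) * (n / 2 - d + x))) :
    aF n d x ≤ c * bF n d x := by
  refine Nat.le_of_mul_le_mul_right (c := d + 1 - x) ?_ (by omega)
  calc aF n d x * (d + 1 - x) ≤ 2 * ((d - x) * ee n d x) * (d + 1 - x) := by
        gcongr; exact aF_le_two_mul_sub_mul_ee x
    _ = 2 * (d - x) * (d + 1 - x) * ee n d x := by ring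
    _ ≤ c * ((x + 1) * (n / 2 - d + x)) * ee n d x := by gcongr
    _ = c * (x + 1) * (es n d x * (d + 1 - x)) := by rw [es_mul_eq_ee_mul hx hd]; ring
    _ ≤ c * bF n d x * (d + 1 - x) := by
        rw [← mul_assoc, mul_assoc c]; gcongr; exact succ_mul_es_le_bF (by omega)

theorem bF_mul_le_mul_sum_ee {x W : ℕ} (hx : x ≤ d) (hd : d ≤ n / 2)
    (h : ∀ ℓ ≤ x, (n / 2 - d + ℓ) * (d + 1) ≤ W * (d + 1 - ℓ)) :
    bF n d x * (d + 1) ≤ W * ∑ ℓ ∈ Finset.range (x + 1), ee n d ℓ := by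
  rw [bF_eq_sum_range, Finset.sum_mul, Finset.mul_sum]
  refine Finset.sum_le_sum fun ℓ hℓ => ?_
  have hℓx : ℓ ≤ x := Nat.le_of_lt_succ (Finset.mem_range.mp hℓ)
  refine Nat.le_of_mul_le_mul_right (c := d + 1 - ℓ) ?_ (by omega)
  calc es n d ℓ * (d + 1) * (d + 1 - ℓ) = ee n d ℓ * ((n / 2 - d + ℓ) * (d + 1)) := by
        rw [mul_right_comm, es_mul_eq_ee_mul (hℓx.trans hx) hd, mul_assoc]
    _ ≤ ee n d ℓ * (W * (d + 1 - ℓ)) := Nat.mul_le_mul_left _ (h ℓ hℓx)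
    _ = W * ee n d ℓ * (d + 1 - ℓ) := by ring

end Classes

theorem MMS_of_eq_mul_add_one {n k c : ℕ} (hk : 1 < k) (hn : n = c * k + 1) :
    MMS n k = n.choose c / ((k : ℝ) - 1 + (c + 1) / ((n : ℝ) - c)) := by
  have hdiv : n / k = c := by
    rw [hn, add_comm, Nat.add_mul_div_right _ _ (by omega), Nat.div_eq_of_lt hk, zero_add]
  have hmod : n % k = 1 := by
    rw [hn, add_comm, Nat.add_mul_mod_self_right, Nat.mod_eq_of_lt hk]
  rw [MMS, hdiv, hmod, Nat.cast_one, one_mul]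

theorem two_mul_sub_div_three_mul_le {d c M : ℕ} (hc : 2 ≤ c) (hM : 2 * d + 2 ≤ M) :
    2 * (d - d / 3) * (d + 1 - d / 3) ≤ c * ((d / 3 + 1) * (M + d / 3)) := by
  obtain ⟨h₁, h₂⟩ : 3 * (d / 3) ≤ d ∧ d ≤ 3 * (d / 3) + 2 := by omega
  generalize d / 3 = x at *
  calc 2 * (d - x) * (d + 1 - x) ≤ 2 * (2 * (x + 1)) * (d + 1 - x) := by gcongr; omega
    _ = 2 * ((x + 1) * (2 * (d + 1 - x))) := by ring
    _ ≤ c * ((x + 1) * (M + x)) := by gcongr; omega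

theorem add_mul_succ_le_two_mul_sub_one_mul {d ℓ M : ℕ} (hℓ : 3 * ℓ ≤ d) (hM : 2 * d + 2 ≤ M) :
    (M + ℓ) * (d + 1) ≤ (2 * M - 1) * (d + 1 - ℓ) := by
  zify [show ℓ ≤ d + 1 by omega, show 1 ≤ 2 * M by omega]
  have hℓ' : (3 * ℓ : ℤ) ≤ d := by exact_mod_cast hℓ
  have hM' : (2 * d + 2 : ℤ) ≤ M := by exact_mod_cast hM
  nlinarith [mul_le_mul_of_nonneg_right hM' (show (0 : ℤ) ≤ d + 1 - 2 * ℓ by linarith)]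

theorem aF_div_le_MMS {n k d u : ℕ} (hk : 1 < k) (hn : n = (2 * d + 1) * k + 1) (heven : Even n)
    (hud : u ≤ d) (hab : aF n d u ≤ (k - 1) * bF n d u)
    (hb : bF n d u * (d + 1) ≤ (n - (2 * d + 1)) * ∑ ℓ ∈ Finset.range (u + 1), ee n d ℓ) :
    (aF n d u : ℝ) / ((k : ℝ) - 1) ≤ MMS n k := by
  set E := ∑ ℓ ∈ Finset.range (u + 1), ee n d ℓ
  have hkey : aF n d u * (2 * d + 1 + 1) ≤ 2 * E * (k - 1) * (n - (2 * d + 1)) :=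
    calc aF n d u * (2 * d + 1 + 1) ≤ (k - 1) * bF n d u * (2 * d + 1 + 1) := by gcongr
      _ = 2 * (k - 1) * (bF n d u * (d + 1)) := by ring
      _ ≤ 2 * (k - 1) * ((n - (2 * d + 1)) * E) := by gcongr
      _ = 2 * E * (k - 1) * (n - (2 * d + 1)) := by ring
  have hcast : ((k - 1 : ℕ) : ℝ) = (k : ℝ) - 1 := by rw [Nat.cast_sub hk.le, Nat.cast_one]
  have hk1 : (0 : ℝ) < (k : ℝ) - 1 := by rw [← hcast]; exact_mod_cast Nat.sub_pos_of_lt hk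
  have hW : (0 : ℝ) < (n : ℝ) - (2 * d + 1 : ℕ) := by
    rw [sub_pos]; exact_mod_cast (show 2 * d + 1 < n by rw [hn]; nlinarith)
  rw [MMS_of_eq_mul_add_one hk hn, choose_eq_aF_add_two_mul_sum_ee heven hud, Nat.cast_add]
  refine div_le_add_div_add hk1 (div_nonneg (by positivity) hW.le) ?_
  rw [mul_div_assoc', div_le_iff₀ hW, ← hcast, ← Nat.cast_sub (by rw [hn]; nlinarith)]
  exact_mod_cast hkey

theorem Q_le_MMS_k_add_one_general (n k d u Q : ℕ)
    (hkodd : Odd k) (hk : 3 ≤ k) (hn : n = (2 * d + 1) * k + 1)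
    (hu : IsLeast {x : ℕ | x ≤ d ∧ aF n d x ≤ (k - 1) * bF n d x} u)
    (hQ : IsGreatest {q : ℕ | Even q ∧ q ≤ aF n d u / (k - 1)} Q) :
    (Q : ℝ) ≤ (aF n d u : ℝ) / ((k : ℝ) - 1) ∧
    (aF n d u : ℝ) / ((k : ℝ) - 1) ≤ MMS n k := by
  obtain ⟨j, hj⟩ := hkodd
  obtain ⟨M, hM_def⟩ : ∃ M, M = (2 * d + 1) * j + 1 := ⟨_, rfl⟩
  have hnM : n = 2 * (M + d) := by rw [hn, hj, hM_def]; ring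
  have hM : 2 * d + 2 ≤ M := by rw [hM_def]; nlinarith
  have hd : d ≤ n / 2 := by omega
  have hhalf : n / 2 - d = M := by omega
  have hu_third : u ≤ d / 3 := hu.2 ⟨by omega, aF_le_mul_bF_of_le (by omega) hd
    (by rw [hhalf]; exact two_mul_sub_div_three_mul_le (by omega) hM)⟩
  have hb : bF n d u * (d + 1) ≤ (n - (2 * d + 1)) * ∑ ℓ ∈ Finset.range (u + 1), ee n d ℓ :=
    bF_mul_le_mul_sum_ee hu.1.1 hd fun ℓ hℓ => by
      rw [hhalf, show n - (2 * d + 1) = 2 * M - 1 by omega]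
      exact add_mul_succ_le_two_mul_sub_one_mul (by omega) hM
  refine ⟨?_, aF_div_le_MMS (by omega) hn ⟨M + d, by omega⟩ hu.1.1 hu.1.2 hb⟩
  calc (Q : ℝ) ≤ ((aF n d u / (k - 1) : ℕ) : ℝ) := by exact_mod_cast hQ.1.2
    _ ≤ aF n d u / ((k - 1 : ℕ) : ℝ) := Nat.cast_div_le
    _ = aF n d u / ((k : ℝ) - 1) := by rw [Nat.cast_sub (by omega), Nat.cast_one]

/-- `Q ≤ a(u)/(k-1) ≤ MMS(n,k)` for odd `k ≥ 3` and `n = (2d+1)k + 1 > 2k`. -/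
theorem Q_le_MMS_k_add_one (n k d u Q : ℕ)
    (hkodd : Odd k) (hk : 3 ≤ k) (hn2k : 2 * k < n) (hn : n = (2 * d + 1) * k + 1)
    (hu : IsLeast {x : ℕ | x ≤ d ∧ aF n d x ≤ (k - 1) * bF n d x} u)
    (hQ : IsGreatest {q : ℕ | Even q ∧ q ≤ aF n d u / (k - 1)} Q) :
    (Q : ℝ) ≤ (aF n d u : ℝ) / ((k : ℝ) - 1) ∧
    (aF n d u : ℝ) / ((k : ℝ) - 1) ≤ MMS n k :=
  Q_le_MMS_k_add_one_general n k d u Q hkodd hk hn hu hQ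
end
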